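/- arXiv:2504.02649 — 2 statements merged into one kernel-verified Lean document; each statement's English description precedes it below -/
import Mathlib

section
/- Let β > 0 and let (A_k)_{k≥1} be d×d real matrices with nonnegative entries such that ρ(Σ_{k=1}^∞ A_k) < 1 and A_k ≼ C k^{−2(1+β)} for all k ≥ 1, for some nonnegative matrix C. Define B_k = Σ_{n=1}^∞ (A^{*n})_k and U_t = Σ_{k=t}^∞ A_k. Then: (i) there is a nonnegative matrix C₁ with U_t ≼ C₁ t^{−(1+2β)} for all t ≥ 1; (ii) Σ_{k=1}^∞ k B_k is finite entrywise; and (iii) there is a nonnegative matrix C₂ such that Σ_{k=1}^{t−1} B_k U_{t−k} ≼ C₂ / t entrywise for all t ≥ 1. -/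
/-- The spectral radius of a real matrix, via its complexification. -/
noncomputable def specRad {d : ℕ} (A : Matrix (Fin d) (Fin d) ℝ) : ENNReal :=
  spectralRadius ℂ (A.map Complex.ofReal)

/-- Convolution of two sequences of matrices: `(a*b)_t = Σ_{k=1}^{t-1} a_k b_{t-k}`. -/
noncomputable def matConv {d : ℕ} (a b : ℕ → Matrix (Fin d) (Fin d) ℝ) (t : ℕ) :
    Matrix (Fin d) (Fin d) ℝ :=
  ∑ k ∈ Finset.Ioo 0 t, a k * b (t - k)

/-- `matConvPow a n` is the `(n+1)`-fold convolution power `a^{*(n+1)}`. -/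
noncomputable def matConvPow {d : ℕ} (a : ℕ → Matrix (Fin d) (Fin d) ℝ) :
    ℕ → ℕ → Matrix (Fin d) (Fin d) ℝ
  | 0 => a
  | n + 1 => matConv a (matConvPow a n)

/-!
(i) For `k ≥ t`, `k^(-2(1+β)) ≤ t^(-2β) k⁻²`, and `Σ_{k ≥ t} k⁻² ≤ 2 / t`.

(ii) Put `M = Σ A_k` and `S = Σ k A_k`, which is finite because `k A_k = O(k^(-(1+2β)))`.
Splitting `k = l + (k - l)` in the convolution, induction on `n` gives entrywise
`Σ_k (A^{*(n+1)})_k ≼ M^(n+1)` and `Σ_k k (A^{*(n+1)})_k ≼ Σ_{a ≤ n} M^a S M^(n-a)`.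
By Gelfand's formula `ρ(M) < 1` makes `‖M^n‖` summable, hence so is the Cauchy product on the
right, and `Σ_k k B_k ≼ Σ_n Σ_{a ≤ n} M^a S M^(n-a)` is finite.

(iii) For `1 ≤ k < t` we have `t ≤ 2 k (t - k)`, and `(t - k) U_{t-k} ≼ C₁` by (i), so
`t Σ_k B_k U_{t-k} ≼ 2 (Σ_k k B_k) C₁`.
-/

open Finset

lemma summable_nat_add_rpow_neg {p : ℝ} (hp : 1 < p) (t : ℕ) :
    Summable fun k : ℕ => ((t + k : ℕ) : ℝ) ^ (-p) := by
  simpa only [add_comm] using (summable_nat_add_iff t).2 (Real.summable_nat_rpow.2 (by linarith))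

lemma tsum_inv_sq_nat_add_le {t : ℕ} (ht : 1 ≤ t) :
    ∑' k : ℕ, (((t + k : ℕ) : ℝ) ^ 2)⁻¹ ≤ 2 / t := by
  refine Real.tsum_le_of_sum_range_le (fun _ => by positivity) fun m => ?_
  calc ∑ k ∈ range m, (((t + k : ℕ) : ℝ) ^ 2)⁻¹
      = ∑ i ∈ Ioo (t - 1) (t + m), ((i : ℝ) ^ 2)⁻¹ := by
        rw [← Finset.Ico_add_one_left_eq_Ioo, Nat.sub_add_cancel ht, sum_Ico_eq_sum_range,
          Nat.add_sub_cancel_left]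
    _ ≤ 2 / ((t - 1 : ℕ) + 1) := sum_Ioo_inv_sq_le _ _
    _ = 2 / t := by rw [Nat.cast_sub ht]; ring_nf

lemma tsum_nat_add_rpow_neg_le {p : ℝ} (hp : 2 ≤ p) {t : ℕ} (ht : 1 ≤ t) :
    ∑' k : ℕ, ((t + k : ℕ) : ℝ) ^ (-p) ≤ 2 * (t : ℝ) ^ (1 - p) := by
  have ht0 : (0 : ℝ) < t := by exact_mod_cast ht
  have hsq : Summable fun k : ℕ => (((t + k : ℕ) : ℝ) ^ 2)⁻¹ := by
    simpa only [add_comm] using (summable_nat_add_iff t).2 (Real.summable_nat_pow_inv.2 one_lt_two)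
  have hterm : ∀ k : ℕ,
      ((t + k : ℕ) : ℝ) ^ (-p) ≤ (t : ℝ) ^ (2 - p) * (((t + k : ℕ) : ℝ) ^ 2)⁻¹ := by
    intro k
    have htk : (t : ℝ) ≤ ((t + k : ℕ) : ℝ) := by exact_mod_cast Nat.le_add_right t k
    have htk0 : (0 : ℝ) < ((t + k : ℕ) : ℝ) := ht0.trans_le htk
    calc ((t + k : ℕ) : ℝ) ^ (-p)
        = ((t + k : ℕ) : ℝ) ^ (2 - p) * (((t + k : ℕ) : ℝ) ^ 2)⁻¹ := by
          rw [← Real.rpow_natCast, ← Real.rpow_neg htk0.le, ← Real.rpow_add htk0]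
          ring_nf
      _ ≤ (t : ℝ) ^ (2 - p) * (((t + k : ℕ) : ℝ) ^ 2)⁻¹ := by
          gcongr ?_ * _
          exact Real.rpow_le_rpow_of_nonpos ht0 htk (by linarith)
  calc ∑' k : ℕ, ((t + k : ℕ) : ℝ) ^ (-p)
      ≤ ∑' k : ℕ, (t : ℝ) ^ (2 - p) * (((t + k : ℕ) : ℝ) ^ 2)⁻¹ :=
        (summable_nat_add_rpow_neg (by linarith) t).tsum_le_tsum hterm (hsq.mul_left _)
    _ = (t : ℝ) ^ (2 - p) * ∑' k : ℕ, (((t + k : ℕ) : ℝ) ^ 2)⁻¹ := tsum_mul_left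
    _ ≤ (t : ℝ) ^ (2 - p) * (2 / t) := by gcongr; exact tsum_inv_sq_nat_add_le ht
    _ = 2 * (t : ℝ) ^ (1 - p) := by
        rw [show (2 : ℝ) - p = (1 - p) + 1 by ring, Real.rpow_add_one ht0.ne']
        field_simp

lemma natCast_mul_le_of_le_mul_rpow_neg {x c q : ℝ} (hc : 0 ≤ c) (hq : 1 ≤ q) {t : ℕ}
    (ht : 1 ≤ t) (hx : x ≤ c * (t : ℝ) ^ (-q)) : (t : ℝ) * x ≤ c := by
  have ht1 : (1 : ℝ) ≤ t := by exact_mod_cast ht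
  have htq : (t : ℝ) * (t : ℝ) ^ (-q) ≤ 1 := by
    rw [mul_comm, ← Real.rpow_add_one (by positivity)]
    exact Real.rpow_le_one_of_one_le_of_nonpos ht1 (by linarith)
  calc (t : ℝ) * x ≤ t * (c * (t : ℝ) ^ (-q)) := by gcongr
    _ = c * ((t : ℝ) * (t : ℝ) ^ (-q)) := by ring
    _ ≤ c := mul_le_of_le_one_right hc htq

lemma sum_range_sum_Ioo_sub_le {M : Type*} [AddCommMonoid M] [PartialOrder M]
    [IsOrderedAddMonoid M] {f : ℕ → ℕ → M} (hf : ∀ l r, 0 ≤ f l r) (m : ℕ) :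
    ∑ k ∈ range m, ∑ l ∈ Ioo 0 k, f l (k - l) ≤ ∑ l ∈ range m, ∑ r ∈ range m, f l r :=
  calc ∑ k ∈ range m, ∑ l ∈ Ioo 0 k, f l (k - l)
      ≤ ∑ k ∈ range m, ∑ l ∈ range (k + 1), f l (k - l) := by
        gcongr with k
        · exact fun _ _ _ => hf _ _
        · intro l hl
          simp only [mem_Ioo, mem_range] at hl ⊢
          omega
    _ = ∑ l ∈ range m, ∑ r ∈ range (m - l), f l r := sum_range_diag_flip m f
    _ ≤ ∑ l ∈ range m, ∑ r ∈ range m, f l r := by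
        gcongr with l
        · exact fun _ _ _ => hf _ _
        · exact Nat.sub_le m l

lemma sum_range_pow_mul_mul_pow_succ {R : Type*} [Semiring R] (M S : R) (n : ℕ) :
    ∑ a ∈ range (n + 2), M ^ a * S * M ^ (n + 1 - a) =
      S * M ^ (n + 1) + M * ∑ a ∈ range (n + 1), M ^ a * S * M ^ (n - a) := by
  rw [sum_range_succ', mul_sum, add_comm]
  simp [pow_succ', mul_assoc]

namespace Matrix

variable {l m n : Type*}

lemma mul_apply_nonneg [Fintype m] {X : Matrix l m ℝ} {Y : Matrix m n ℝ}
    (hX : ∀ i j, 0 ≤ X i j) (hY : ∀ i j, 0 ≤ Y i j) (i : l) (j : n) : 0 ≤ (X * Y) i j :=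
  sum_nonneg fun x _ => mul_nonneg (hX i x) (hY x j)

lemma mul_apply_le_mul_apply [Fintype m] {X X' : Matrix l m ℝ} {Y Y' : Matrix m n ℝ}
    (hX : ∀ i j, 0 ≤ X i j) (hY : ∀ i j, 0 ≤ Y i j) (hXX' : ∀ i j, X i j ≤ X' i j)
    (hYY' : ∀ i j, Y i j ≤ Y' i j) (i : l) (j : n) : (X * Y) i j ≤ (X' * Y') i j :=
  sum_le_sum fun x _ => mul_le_mul (hXX' i x) (hYY' x j) (hY x j) ((hX i x).trans (hXX' i x))

lemma sum_apply_nonneg {ι : Type*} {s : Finset ι} {f : ι → Matrix m n ℝ}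
    (hf : ∀ k i j, 0 ≤ f k i j) (i : m) (j : n) : 0 ≤ (∑ k ∈ s, f k) i j := by
  rw [sum_apply]
  exact sum_nonneg fun k _ => hf k i j

lemma natCast_smul_apply_nonneg {f : ℕ → Matrix m n ℝ} (hf : ∀ k i j, 0 ≤ f k i j)
    (k : ℕ) (i : m) (j : n) : 0 ≤ ((k : ℝ) • f k) i j :=
  mul_nonneg (Nat.cast_nonneg k) (hf k i j)

lemma summable_iff_apply {f : ℕ → Matrix m n ℝ} :
    Summable f ↔ ∀ i j, Summable fun k => f k i j :=
  ⟨fun hf i j => Pi.summable.1 (Pi.summable.1 hf i) j,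
    fun h => Pi.summable.2 fun i => Pi.summable.2 (h i)⟩

lemma tsum_apply {f : ℕ → Matrix m n ℝ} (hf : Summable f) (i : m) (j : n) :
    (∑' k, f k) i j = ∑' k, f k i j :=
  (congrFun (_root_.tsum_apply hf (x := i)) j).trans
    (_root_.tsum_apply (Pi.summable.1 hf i) (x := j))

lemma tsum_apply_nonneg {f : ℕ → Matrix m n ℝ} (hf : ∀ k i j, 0 ≤ f k i j) (i : m) (j : n) :
    0 ≤ (∑' k, f k) i j := by
  by_cases hfs : Summable f
  · rw [tsum_apply hfs]
    exact tsum_nonneg fun k => hf k i j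
  · rw [tsum_eq_zero_of_not_summable hfs]
    rfl

lemma sum_range_apply_le_tsum_apply {f : ℕ → Matrix m n ℝ} (hf : ∀ k i j, 0 ≤ f k i j)
    (hfs : Summable f) (t : ℕ) (i : m) (j : n) :
    (∑ k ∈ range t, f k) i j ≤ (∑' k, f k) i j := by
  rw [sum_apply, tsum_apply hfs]
  exact (summable_iff_apply.1 hfs i j).sum_le_tsum _ fun k _ => hf k i j

end Matrix

section LinftyOpNorm

attribute [local instance] Matrix.linftyOpNormedRing Matrix.linftyOpNormedAlgebra

variable {d : ℕ} {M : Matrix (Fin d) (Fin d) ℝ}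

lemma Matrix.linfty_opNorm_map_ofReal (M : Matrix (Fin d) (Fin d) ℝ) :
    ‖M.map Complex.ofReal‖ = ‖M‖ := by
  simp [Matrix.linfty_opNorm_def]

lemma Matrix.summable_apply_of_summable_norm {f : ℕ → Matrix (Fin d) (Fin d) ℝ}
    (hf : Summable fun k => ‖f k‖) (i j : Fin d) : Summable fun k => f k i j := by
  have : CompleteSpace (Matrix (Fin d) (Fin d) ℝ) := FiniteDimensional.complete ℝ _
  exact summable_iff_apply.1 hf.of_norm i j

lemma summable_norm_pow_of_specRad_lt_one (h : specRad M < 1) :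
    Summable fun n => ‖M ^ n‖ := by
  obtain ⟨r, hρr, hr1⟩ := ENNReal.lt_iff_exists_nnreal_btwn.1 h
  have hgelfand := (spectrum.pow_norm_pow_one_div_tendsto_nhds_spectralRadius
    (M.map Complex.ofReal)).eventually_lt_const hρr
  refine Summable.of_norm_bounded_eventually_nat (g := fun n => (r : ℝ) ^ n)
    (summable_geometric_of_lt_one r.2 (by exact_mod_cast hr1)) ?_
  filter_upwards [hgelfand, Filter.eventually_gt_atTop 0] with n hn hn0
  have hpow : M.map Complex.ofReal ^ n = (M ^ n).map Complex.ofReal :=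
    (Matrix.map_pow M Complex.ofRealHom n).symm
  rw [hpow, Matrix.linfty_opNorm_map_ofReal, ENNReal.ofReal_lt_iff_lt_toReal
    (by positivity) ENNReal.coe_ne_top, ENNReal.coe_toReal, one_div] at hn
  rw [norm_norm, ← Real.rpow_natCast]
  exact ((Real.rpow_inv_lt_iff_of_pos (norm_nonneg _) r.2 (by exact_mod_cast hn0)).1 hn).le

lemma summable_pow_apply_of_specRad_lt_one (h : specRad M < 1) (i j : Fin d) :
    Summable fun n => (M ^ n) i j :=
  Matrix.summable_apply_of_summable_norm (summable_norm_pow_of_specRad_lt_one h) i j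

lemma summable_sum_pow_mul_mul_pow_apply_of_specRad_lt_one (h : specRad M < 1)
    (S : Matrix (Fin d) (Fin d) ℝ) (i j : Fin d) :
    Summable fun n => (∑ a ∈ range (n + 1), M ^ a * S * M ^ (n - a)) i j := by
  have hpow := summable_norm_pow_of_specRad_lt_one h
  have hpowS : Summable fun a => ‖M ^ a * S‖ :=
    (hpow.mul_right ‖S‖).of_nonneg_of_le (fun _ => norm_nonneg _) fun _ => norm_mul_le _ _
  exact Matrix.summable_apply_of_summable_norm
    (summable_norm_sum_mul_range_of_summable_norm hpowS hpow) i j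

end LinftyOpNorm

section Convolution

variable {d : ℕ}

lemma matConv_apply (a b : ℕ → Matrix (Fin d) (Fin d) ℝ) (t : ℕ) (i j : Fin d) :
    matConv a b t i j = ∑ k ∈ Ioo 0 t, (a k * b (t - k)) i j := by
  rw [matConv, Matrix.sum_apply]

lemma sum_range_matConv_apply_le {a b : ℕ → Matrix (Fin d) (Fin d) ℝ}
    (ha : ∀ k i j, 0 ≤ a k i j) (hb : ∀ k i j, 0 ≤ b k i j) (m : ℕ) (i j : Fin d) :
    (∑ k ∈ range m, matConv a b k) i j ≤
      ((∑ k ∈ range m, a k) * ∑ k ∈ range m, b k) i j := by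
  simp only [Matrix.sum_apply, matConv_apply, sum_mul_sum]
  exact sum_range_sum_Ioo_sub_le (fun l r => Matrix.mul_apply_nonneg (ha l) (hb r) i j) m

lemma sum_range_natCast_smul_matConv_apply_le {a b : ℕ → Matrix (Fin d) (Fin d) ℝ}
    (ha : ∀ k i j, 0 ≤ a k i j) (hb : ∀ k i j, 0 ≤ b k i j) (m : ℕ) (i j : Fin d) :
    (∑ k ∈ range m, (k : ℝ) • matConv a b k) i j ≤
      ((∑ k ∈ range m, (k : ℝ) • a k) * (∑ k ∈ range m, b k) +
        (∑ k ∈ range m, a k) * ∑ k ∈ range m, (k : ℝ) • b k) i j := by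
  have hlhs : ∀ k : ℕ, ∑ l ∈ Ioo 0 k, (k : ℝ) * (a l * b (k - l)) i j =
      ∑ l ∈ Ioo 0 k, ((l + (k - l) : ℕ) : ℝ) * (a l * b (k - l)) i j :=
    fun k => sum_congr rfl fun l hl => by rw [Nat.add_sub_cancel' (mem_Ioo.1 hl).2.le]
  have hrhs : ((∑ k ∈ range m, (k : ℝ) • a k) * (∑ k ∈ range m, b k) +
        (∑ k ∈ range m, a k) * ∑ k ∈ range m, (k : ℝ) • b k) i j =
      ∑ l ∈ range m, ∑ r ∈ range m, ((l + r : ℕ) : ℝ) * (a l * b r) i j := by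
    simp only [sum_mul_sum, Matrix.smul_mul, Matrix.mul_smul, Matrix.add_apply,
      Matrix.sum_apply, Matrix.smul_apply, smul_eq_mul, ← sum_add_distrib]
    push_cast
    simp only [add_mul]
  rw [hrhs]
  simp only [Matrix.sum_apply, Matrix.smul_apply, matConv_apply, smul_eq_mul, mul_sum, hlhs]
  exact sum_range_sum_Ioo_sub_le (f := fun l r => ((l + r : ℕ) : ℝ) * (a l * b r) i j)
    (fun l r => mul_nonneg (Nat.cast_nonneg _) (Matrix.mul_apply_nonneg (ha l) (hb r) i j)) m

variable {A : ℕ → Matrix (Fin d) (Fin d) ℝ} {M S : Matrix (Fin d) (Fin d) ℝ}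

lemma matConvPow_apply_nonneg (hA : ∀ k i j, 0 ≤ A k i j) (n k : ℕ) (i j : Fin d) :
    0 ≤ matConvPow A n k i j := by
  induction n generalizing k i j with
  | zero => exact hA k i j
  | succ n ih =>
    rw [matConvPow, matConv_apply]
    exact sum_nonneg fun l _ => Matrix.mul_apply_nonneg (hA l) (ih _) i j

lemma sum_range_matConvPow_apply_le (hA : ∀ k i j, 0 ≤ A k i j)
    (hM : ∀ m i j, (∑ k ∈ range m, A k) i j ≤ M i j) (n m : ℕ) (i j : Fin d) :
    (∑ k ∈ range m, matConvPow A n k) i j ≤ (M ^ (n + 1)) i j := by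
  induction n generalizing i j with
  | zero => simpa [matConvPow] using hM m i j
  | succ n ih =>
    calc (∑ k ∈ range m, matConvPow A (n + 1) k) i j
        ≤ ((∑ k ∈ range m, A k) * ∑ k ∈ range m, matConvPow A n k) i j :=
          sum_range_matConv_apply_le hA (matConvPow_apply_nonneg hA n) m i j
      _ ≤ (M * M ^ (n + 1)) i j :=
          Matrix.mul_apply_le_mul_apply (Matrix.sum_apply_nonneg hA)
            (Matrix.sum_apply_nonneg (matConvPow_apply_nonneg hA n)) (hM m) ih i j
      _ = (M ^ (n + 2)) i j := by rw [← pow_succ']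

/-- `Σ_a M^a S M^(n-a)` is the derivative of `X ↦ X^(n+1)` at `M` in the direction `S`. -/
lemma sum_range_natCast_smul_matConvPow_apply_le (hA : ∀ k i j, 0 ≤ A k i j)
    (hM : ∀ m i j, (∑ k ∈ range m, A k) i j ≤ M i j)
    (hS : ∀ m i j, (∑ k ∈ range m, (k : ℝ) • A k) i j ≤ S i j) (n m : ℕ) (i j : Fin d) :
    (∑ k ∈ range m, (k : ℝ) • matConvPow A n k) i j ≤
      (∑ a ∈ range (n + 1), M ^ a * S * M ^ (n - a)) i j := by
  induction n generalizing i j with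
  | zero => simpa [matConvPow] using hS m i j
  | succ n ih =>
    have hP := matConvPow_apply_nonneg hA n
    calc (∑ k ∈ range m, (k : ℝ) • matConvPow A (n + 1) k) i j
        ≤ ((∑ k ∈ range m, (k : ℝ) • A k) * (∑ k ∈ range m, matConvPow A n k) +
            (∑ k ∈ range m, A k) * ∑ k ∈ range m, (k : ℝ) • matConvPow A n k) i j :=
          sum_range_natCast_smul_matConv_apply_le hA hP m i j
      _ ≤ (S * M ^ (n + 1) + M * ∑ a ∈ range (n + 1), M ^ a * S * M ^ (n - a)) i j :=
          add_le_add
            (Matrix.mul_apply_le_mul_apply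
              (Matrix.sum_apply_nonneg (Matrix.natCast_smul_apply_nonneg hA))
              (Matrix.sum_apply_nonneg hP) (hS m) (sum_range_matConvPow_apply_le hA hM n m) i j)
            (Matrix.mul_apply_le_mul_apply (Matrix.sum_apply_nonneg hA)
              (Matrix.sum_apply_nonneg (Matrix.natCast_smul_apply_nonneg hP)) (hM m) ih i j)
      _ = (∑ a ∈ range (n + 2), M ^ a * S * M ^ (n + 1 - a)) i j := by
          rw [sum_range_pow_mul_mul_pow_succ]

end Convolution

section Kernel

variable {d : ℕ} {A : ℕ → Matrix (Fin d) (Fin d) ℝ} {C : Matrix (Fin d) (Fin d) ℝ} {p : ℝ}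

lemma tsum_nat_add_apply_le (hp : 2 ≤ p) (hAsum : Summable A) (hC : ∀ i j, 0 ≤ C i j)
    (hdom : ∀ k : ℕ, 1 ≤ k → ∀ i j, A k i j ≤ C i j * (k : ℝ) ^ (-p)) {t : ℕ} (ht : 1 ≤ t)
    (i j : Fin d) : (∑' k, A (t + k)) i j ≤ 2 * C i j * (t : ℝ) ^ (1 - p) := by
  have hshift : Summable fun k => A (t + k) := by
    simpa only [add_comm] using (summable_nat_add_iff t).2 hAsum
  rw [Matrix.tsum_apply hshift]
  calc ∑' k, A (t + k) i j ≤ ∑' k : ℕ, C i j * ((t + k : ℕ) : ℝ) ^ (-p) :=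
        (Matrix.summable_iff_apply.1 hshift i j).tsum_le_tsum
          (fun k => hdom (t + k) (by omega) i j)
          ((summable_nat_add_rpow_neg (by linarith) t).mul_left _)
    _ = C i j * ∑' k : ℕ, ((t + k : ℕ) : ℝ) ^ (-p) := tsum_mul_left
    _ ≤ C i j * (2 * (t : ℝ) ^ (1 - p)) :=
        mul_le_mul_of_nonneg_left (tsum_nat_add_rpow_neg_le hp ht) (hC i j)
    _ = 2 * C i j * (t : ℝ) ^ (1 - p) := by ring

lemma summable_natCast_smul_of_le_rpow (hp : 2 < p) (hA : ∀ k i j, 0 ≤ A k i j)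
    (hdom : ∀ k : ℕ, 1 ≤ k → ∀ i j, A k i j ≤ C i j * (k : ℝ) ^ (-p)) :
    Summable fun k : ℕ => (k : ℝ) • A k := by
  refine Matrix.summable_iff_apply.2 fun i j => ?_
  refine Summable.of_nonneg_of_le (fun k => Matrix.natCast_smul_apply_nonneg hA k i j)
    (fun k => ?_) ((Real.summable_nat_rpow.2 (by linarith : 1 - p < -1)).mul_left (C i j))
  change (k : ℝ) * A k i j ≤ C i j * (k : ℝ) ^ (1 - p)
  rcases Nat.eq_zero_or_pos k with rfl | hk
  · simp [Real.zero_rpow (by linarith : 1 - p ≠ 0)]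
  · calc (k : ℝ) * A k i j ≤ k * (C i j * (k : ℝ) ^ (-p)) :=
          mul_le_mul_of_nonneg_left (hdom k hk i j) k.cast_nonneg
      _ = C i j * (k : ℝ) ^ (1 - p) := by
          rw [sub_eq_neg_add, Real.rpow_add_one (by positivity)]
          ring

lemma summable_natCast_mul_tsum_matConvPow_apply (hA : ∀ k i j, 0 ≤ A k i j)
    (hAsum : Summable A) (hkA : Summable fun k : ℕ => (k : ℝ) • A k)
    (hρ : specRad (∑' k, A k) < 1) (i j : Fin d) :
    Summable fun k : ℕ => (k : ℝ) * (∑' n, matConvPow A n k) i j := by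
  set M := ∑' k, A k
  set S := ∑' k : ℕ, (k : ℝ) • A k
  have hM := Matrix.sum_range_apply_le_tsum_apply hA hAsum
  have hS := Matrix.sum_range_apply_le_tsum_apply (Matrix.natCast_smul_apply_nonneg hA) hkA
  have hP := matConvPow_apply_nonneg hA
  have hPsum : ∀ k, Summable fun n => matConvPow A n k := by
    refine fun k => Matrix.summable_iff_apply.2 fun i j => ?_
    refine Summable.of_nonneg_of_le (fun n => hP n k i j) (fun n => ?_)
      ((summable_nat_add_iff 1).2 (summable_pow_apply_of_specRad_lt_one hρ i j))
    calc matConvPow A n k i j ≤ ∑ l ∈ range (k + 1), matConvPow A n l i j :=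
          single_le_sum (fun l _ => hP n l i j) (self_mem_range_succ k)
      _ ≤ (M ^ (n + 1)) i j := by
          rw [← Matrix.sum_apply]
          exact sum_range_matConvPow_apply_le hA hM n (k + 1) i j
  have hW := sum_range_natCast_smul_matConvPow_apply_le hA hM hS
  have hV := summable_sum_pow_mul_mul_pow_apply_of_specRad_lt_one hρ S i j
  refine summable_of_sum_range_le (c := ∑' n, (∑ a ∈ range (n + 1), M ^ a * S * M ^ (n - a)) i j)
    (fun k => mul_nonneg k.cast_nonneg (Matrix.tsum_apply_nonneg (hP · k) i j)) fun m => ?_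
  calc ∑ k ∈ range m, (k : ℝ) * (∑' n, matConvPow A n k) i j
      = ∑' n, (∑ k ∈ range m, (k : ℝ) • matConvPow A n k) i j := by
        simp only [Matrix.tsum_apply (hPsum _), Matrix.sum_apply, Matrix.smul_apply,
          smul_eq_mul, ← tsum_mul_left]
        exact (Summable.tsum_finsetSum fun k _ =>
          ((Matrix.summable_iff_apply.1 (hPsum k) i j).mul_left _)).symm
    _ ≤ ∑' n, (∑ a ∈ range (n + 1), M ^ a * S * M ^ (n - a)) i j :=
        Summable.tsum_le_tsum (fun n => hW n m i j)
          (hV.of_nonneg_of_le (fun n => Matrix.sum_apply_nonneg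
            (Matrix.natCast_smul_apply_nonneg (hP n)) i j) fun n => hW n m i j) hV

end Kernel

lemma natCast_mul_apply_sub_le {d : ℕ} {U : ℕ → Matrix (Fin d) (Fin d) ℝ}
    {D : Matrix (Fin d) (Fin d) ℝ} (hU : ∀ t i j, 0 ≤ U t i j)
    (hUD : ∀ t : ℕ, 1 ≤ t → ∀ i j, (t : ℝ) * U t i j ≤ D i j) {t k : ℕ} (hk : k ∈ Ioo 0 t)
    (i j : Fin d) : (t : ℝ) * U (t - k) i j ≤ 2 * k * D i j := by
  obtain ⟨hk0, hkt⟩ := mem_Ioo.1 hk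
  have hk1 : (1 : ℝ) ≤ k := by exact_mod_cast hk0
  have htk1 : (1 : ℝ) ≤ ((t - k : ℕ) : ℝ) := by exact_mod_cast (by omega : 1 ≤ t - k)
  have htk : (t : ℝ) ≤ 2 * k * ((t - k : ℕ) : ℝ) := by
    rw [Nat.cast_sub hkt.le] at htk1 ⊢
    nlinarith
  calc (t : ℝ) * U (t - k) i j ≤ 2 * k * ((t - k : ℕ) : ℝ) * U (t - k) i j :=
        mul_le_mul_of_nonneg_right htk (hU _ i j)
    _ ≤ 2 * k * D i j := by
        rw [mul_assoc]
        exact mul_le_mul_of_nonneg_left (hUD _ (by omega) i j) (by positivity)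

lemma exists_sum_Ioo_mul_apply_le_div {d : ℕ} {B U : ℕ → Matrix (Fin d) (Fin d) ℝ}
    {D : Matrix (Fin d) (Fin d) ℝ} (hB : ∀ k i j, 0 ≤ B k i j) (hU : ∀ t i j, 0 ≤ U t i j)
    (hkB : ∀ i j, Summable fun k : ℕ => (k : ℝ) * B k i j)
    (hUD : ∀ t : ℕ, 1 ≤ t → ∀ i j, (t : ℝ) * U t i j ≤ D i j) :
    ∃ C₂ : Matrix (Fin d) (Fin d) ℝ, (∀ i j, 0 ≤ C₂ i j) ∧
      ∀ t : ℕ, 1 ≤ t → ∀ i j, (∑ k ∈ Ioo 0 t, B k * U (t - k)) i j ≤ C₂ i j / t := by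
  set K : Matrix (Fin d) (Fin d) ℝ := Matrix.of fun i j => ∑' k : ℕ, (k : ℝ) * B k i j
  have hK : ∀ i j, 0 ≤ K i j := fun i j => tsum_nonneg fun k => mul_nonneg k.cast_nonneg (hB k i j)
  have hD : ∀ i j, 0 ≤ D i j := fun i j => (hU 1 i j).trans (by simpa using hUD 1 le_rfl i j)
  refine ⟨(2 : ℝ) • (K * D), fun i j => mul_nonneg zero_le_two (Matrix.mul_apply_nonneg hK hD i j),
    fun t ht i j => ?_⟩
  rw [le_div_iff₀ (by exact_mod_cast ht)]
  calc (∑ k ∈ Ioo 0 t, B k * U (t - k)) i j * t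
      = ∑ k ∈ Ioo 0 t, ∑ l, B k i l * ((t : ℝ) * U (t - k) l j) := by
        simp only [Matrix.sum_apply, Matrix.mul_apply, sum_mul]
        exact sum_congr rfl fun _ _ => sum_congr rfl fun _ _ => by ring
    _ ≤ ∑ k ∈ Ioo 0 t, ∑ l, B k i l * (2 * k * D l j) :=
        sum_le_sum fun k hk => sum_le_sum fun l _ =>
          mul_le_mul_of_nonneg_left (natCast_mul_apply_sub_le hU hUD hk l j) (hB k i l)
    _ = 2 * ∑ l, (∑ k ∈ Ioo 0 t, (k : ℝ) * B k i l) * D l j := by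
        simp only [mul_sum, sum_mul]
        rw [sum_comm]
        exact sum_congr rfl fun _ _ => sum_congr rfl fun _ _ => by ring
    _ ≤ 2 * ∑ l, K i l * D l j := by
        gcongr with l
        · exact hD l j
        · exact (hkB i l).sum_le_tsum _ fun k _ => mul_nonneg k.cast_nonneg (hB k i l)
    _ = ((2 : ℝ) • (K * D)) i j := by simp [K, Matrix.mul_apply]

theorem stmt8_general {d : ℕ} (β : ℝ) (hβ : 0 < β) (A : ℕ → Matrix (Fin d) (Fin d) ℝ)
    (hAnn : ∀ k i j, 0 ≤ A k i j) (hAsum : Summable A)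
    (hρ : specRad (∑' k, A k) < 1)
    (C : Matrix (Fin d) (Fin d) ℝ) (hC : ∀ i j, 0 ≤ C i j)
    (hdom : ∀ k : ℕ, 1 ≤ k → ∀ i j, A k i j ≤ C i j * (k : ℝ) ^ (-(2 * (1 + β))))
    (B : ℕ → Matrix (Fin d) (Fin d) ℝ) (hB : ∀ k, B k = ∑' n : ℕ, matConvPow A n k)
    (U : ℕ → Matrix (Fin d) (Fin d) ℝ) (hU : ∀ t, U t = ∑' k : ℕ, A (t + k)) :
    (∃ C₁ : Matrix (Fin d) (Fin d) ℝ, (∀ i j, 0 ≤ C₁ i j) ∧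
      ∀ t : ℕ, 1 ≤ t → ∀ i j, U t i j ≤ C₁ i j * (t : ℝ) ^ (-(1 + 2 * β))) ∧
    (∀ i j, Summable (fun k : ℕ => (k : ℝ) * B k i j)) ∧
    (∃ C₂ : Matrix (Fin d) (Fin d) ℝ, (∀ i j, 0 ≤ C₂ i j) ∧
      ∀ t : ℕ, 1 ≤ t → ∀ i j,
        (∑ k ∈ Finset.Ioo 0 t, B k * U (t - k)) i j ≤ C₂ i j / t) := by
  set C₁ : Matrix (Fin d) (Fin d) ℝ := (2 : ℝ) • C
  have hC₁ : ∀ i j, 0 ≤ C₁ i j := fun i j => mul_nonneg zero_le_two (hC i j)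
  have hU_le : ∀ t : ℕ, 1 ≤ t → ∀ i j, U t i j ≤ C₁ i j * (t : ℝ) ^ (-(1 + 2 * β)) := by
    intro t ht i j
    rw [hU, show -(1 + 2 * β) = 1 - 2 * (1 + β) by ring]
    exact tsum_nat_add_apply_le (by linarith) hAsum hC hdom ht i j
  have hkB : ∀ i j, Summable fun k : ℕ => (k : ℝ) * B k i j := by
    simpa only [hB] using summable_natCast_mul_tsum_matConvPow_apply hAnn hAsum
      (summable_natCast_smul_of_le_rpow (by linarith) hAnn hdom) hρ
  have hBnn : ∀ k i j, 0 ≤ B k i j := fun k i j => by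
    rw [hB]; exact Matrix.tsum_apply_nonneg (fun n => matConvPow_apply_nonneg hAnn n k) i j
  have hUnn : ∀ t i j, 0 ≤ U t i j := fun t i j => by
    rw [hU]; exact Matrix.tsum_apply_nonneg (fun k => hAnn (t + k)) i j
  exact ⟨⟨C₁, hC₁, hU_le⟩, hkB, exists_sum_Ioo_mul_apply_le_div hBnn hUnn hkB fun t ht i j =>
    natCast_mul_le_of_le_mul_rpow_neg (hC₁ i j) (by linarith) ht (hU_le t ht i j)⟩

/-- Polynomially dominated kernels: if the nonnegative matrices `(A_k)_{k≥1}` satisfy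
`ρ(Σ A_k) < 1` and `A_k ≼ C k^{−2(1+β)}`, then with `B_k = Σ_{n≥1} (A^{*n})_k` and
`U_t = Σ_{k≥t} A_k`: (i) `U_t ≼ C₁ t^{−(1+2β)}`; (ii) `Σ_k k B_k` is finite entrywise;
(iii) `Σ_{k=1}^{t−1} B_k U_{t−k} ≼ C₂ / t` for all `t ≥ 1`.
The family `(A_k)_{k≥1}` is encoded with `A 0 = 0`. -/
theorem stmt8 {d : ℕ} (β : ℝ) (hβ : 0 < β) (A : ℕ → Matrix (Fin d) (Fin d) ℝ)
    (hA0 : A 0 = 0) (hAnn : ∀ k i j, 0 ≤ A k i j) (hAsum : Summable A)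
    (hρ : specRad (∑' k, A k) < 1)
    (C : Matrix (Fin d) (Fin d) ℝ) (hC : ∀ i j, 0 ≤ C i j)
    (hdom : ∀ k : ℕ, 1 ≤ k → ∀ i j, A k i j ≤ C i j * (k : ℝ) ^ (-(2 * (1 + β))))
    (B : ℕ → Matrix (Fin d) (Fin d) ℝ) (hB : ∀ k, B k = ∑' n : ℕ, matConvPow A n k)
    (U : ℕ → Matrix (Fin d) (Fin d) ℝ) (hU : ∀ t, U t = ∑' k : ℕ, A (t + k)) :
    (∃ C₁ : Matrix (Fin d) (Fin d) ℝ, (∀ i j, 0 ≤ C₁ i j) ∧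
      ∀ t : ℕ, 1 ≤ t → ∀ i j, U t i j ≤ C₁ i j * (t : ℝ) ^ (-(1 + 2 * β))) ∧
    (∀ i j, Summable (fun k : ℕ => (k : ℝ) * B k i j)) ∧
    (∃ C₂ : Matrix (Fin d) (Fin d) ℝ, (∀ i j, 0 ≤ C₂ i j) ∧
      ∀ t : ℕ, 1 ≤ t → ∀ i j,
        (∑ k ∈ Finset.Ioo 0 t, B k * U (t - k)) i j ≤ C₂ i j / t) :=
  stmt8_general β hβ A hAnn hAsum hρ C hC hdom B hB U hU
end

section
/- Let (A_k)_{k≥1} be a summable family of d×d real matrices with nonnegative entries and set S = Σ_{k=1}^∞ A_k. If ρ(S) < 1, then: (i) for every n ≥ 1, Σ_{k=1}^∞ (A^{*n})_k = S^n; and (ii) the double family ((A^{*n})_k)_{n≥1, k≥1} is summable, so that B_k := Σ_{n=1}^∞ (A^{*n})_k is well defined and Σ_{k=1}^∞ B_k = (I − S)^{−1} S. -/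
open Filter Finset

theorem summable_pow_of_spectralRadius_lt_one {A : Type*} [NormedRing A] [NormedAlgebra ℂ A]
    [CompleteSpace A] {a : A} (ha : spectralRadius ℂ a < 1) : Summable (a ^ ·) := by
  obtain ⟨r, hρr, hr1⟩ := ENNReal.lt_iff_exists_nnreal_btwn.mp ha
  refine .of_norm_bounded_eventually_nat
    (summable_geometric_of_lt_one r.coe_nonneg (by exact_mod_cast hr1)) ?_
  filter_upwards
    [(spectrum.pow_nnnorm_pow_one_div_tendsto_nhds_spectralRadius a).eventually_lt_const hρr,
      eventually_gt_atTop 0] with n hn hn0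
  rw [one_div, ENNReal.rpow_inv_lt_iff (by positivity), ENNReal.rpow_natCast] at hn
  exact_mod_cast hn.le

theorem Matrix.summable_pow_of_spectralRadius_lt_one {n : Type*} [Fintype n] [DecidableEq n]
    {a : Matrix n n ℂ} (ha : spectralRadius ℂ a < 1) : Summable (a ^ ·) := by
  -- any submultiplicative norm will do; this one induces the product topology
  let := Matrix.linftyOpNormedRing (n := n) (α := ℂ)
  let := Matrix.linftyOpNormedAlgebra (n := n) (α := ℂ) (R := ℂ)
  have : CompleteSpace (Matrix n n ℂ) := FiniteDimensional.complete ℂ _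
  exact _root_.summable_pow_of_spectralRadius_lt_one ha

theorem summable_pow_of_specRad_lt_one {d : ℕ} {S : Matrix (Fin d) (Fin d) ℝ}
    (hS : specRad S < 1) : Summable (S ^ ·) := by
  have hre := (Matrix.summable_pow_of_spectralRadius_lt_one hS).map
    Complex.reAddGroupHom.mapMatrix (continuous_id.matrix_map Complex.continuous_re)
  convert hre using 2 with n
  rw [Function.comp_apply, show S.map Complex.ofReal = S.map Complex.ofRealHom from rfl,
    ← Matrix.map_pow]
  ext
  simp

theorem Matrix.tsum_pow_succ_eq_inv_one_sub_mul {n R : Type*} [Fintype n] [DecidableEq n]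
    [CommRing R] [TopologicalSpace R] [IsTopologicalRing R] [T2Space R] {S : Matrix n n R}
    (hS : Summable (S ^ ·)) : ∑' k : ℕ, S ^ (k + 1) = (1 - S)⁻¹ * S := by
  simp_rw [pow_succ, Matrix.inv_eq_right_inv hS.one_sub_mul_tsum_pow]
  exact hS.tsum_mul_right S

section Entrywise

variable {ι m n : Type*}

theorem Matrix.summable_iff_forall_apply {R : Type*} [AddCommMonoid R] [TopologicalSpace R]
    {f : ι → Matrix m n R} : Summable f ↔ ∀ i j, Summable fun k => f k i j :=
  Pi.summable.trans (forall_congr' fun _ => Pi.summable)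

theorem HasSum.matrix_apply {R : Type*} [AddCommMonoid R] [TopologicalSpace R]
    {f : ι → Matrix m n R} {a : Matrix m n R} (hf : HasSum f a) (i : m) (j : n) :
    HasSum (fun k => f k i j) (a i j) :=
  Pi.hasSum.mp (Pi.hasSum.mp hf i) j

theorem Matrix.summable_mul_prod_of_nonneg {α β p : Type*} [Fintype n]
    {f : α → Matrix m n ℝ} {g : β → Matrix n p ℝ} (hf : Summable f) (hg : Summable g)
    (hf0 : ∀ k i j, 0 ≤ f k i j) (hg0 : ∀ k i j, 0 ≤ g k i j) :
    Summable fun x : α × β => f x.1 * g x.2 := by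
  refine summable_iff_forall_apply.mpr fun i j => ?_
  simp only [Matrix.mul_apply]
  exact summable_sum fun l _ => (summable_iff_forall_apply.mp hf i l).mul_of_nonneg
    (summable_iff_forall_apply.mp hg l j) (hf0 · i l) (hg0 · l j)

theorem Matrix.summable_prod_of_nonneg_of_hasSum {α β : Type*}
    {f : α × β → Matrix m n ℝ} {g : α → Matrix m n ℝ} (hf0 : ∀ x i j, 0 ≤ f x i j)
    (hf : ∀ a, HasSum (fun b => f (a, b)) (g a)) (hg : Summable g) : Summable f := by
  refine summable_iff_forall_apply.mpr fun i j => ?_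
  refine (summable_prod_of_nonneg (hf0 · i j)).mpr
    ⟨fun a => ((hf a).matrix_apply i j).summable, ?_⟩
  simpa only [((hf _).matrix_apply i j).tsum_eq] using summable_iff_forall_apply.mp hg i j

end Entrywise

section Convolution

variable {d : ℕ} {a b : ℕ → Matrix (Fin d) (Fin d) ℝ}

theorem matConv_eq_sum_range (ha0 : a 0 = 0) (hb0 : b 0 = 0) (t : ℕ) :
    matConv a b t = ∑ k ∈ range (t + 1), a k * b (t - k) := by
  refine sum_subset (fun k hk => by simp only [mem_Ioo] at hk; simp; omega) fun k hk hk' => ?_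
  obtain rfl | rfl : k = 0 ∨ k = t := by simp only [mem_range, mem_Ioo] at hk hk'; omega
  · simp [ha0]
  · simp [hb0]

theorem matConv_nonneg (ha : ∀ k i j, 0 ≤ a k i j) (hb : ∀ k i j, 0 ≤ b k i j) (t : ℕ)
    (i j : Fin d) : 0 ≤ matConv a b t i j := by
  simp only [matConv, Matrix.sum_apply, Matrix.mul_apply]
  exact sum_nonneg fun k _ => sum_nonneg fun l _ => mul_nonneg (ha k i l) (hb _ l j)

theorem hasSum_matConv (ha0 : a 0 = 0) (hb0 : b 0 = 0) (han : ∀ k i j, 0 ≤ a k i j)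
    (hbn : ∀ k i j, 0 ≤ b k i j) (ha : Summable a) (hb : Summable b) :
    HasSum (matConv a b) ((∑' k, a k) * ∑' k, b k) := by
  have hab := Matrix.summable_mul_prod_of_nonneg ha hb han hbn
  rw [funext (matConv_eq_sum_range ha0 hb0), ha.tsum_mul_tsum_eq_tsum_sum_range hb hab]
  exact (summable_sum_mul_range_of_summable_mul hab).hasSum

theorem matConvPow_apply_zero (ha0 : a 0 = 0) : ∀ n, matConvPow a n 0 = 0
  | 0 => ha0
  | _ + 1 => by simp [matConvPow, matConv]

theorem matConvPow_nonneg (han : ∀ k i j, 0 ≤ a k i j) : ∀ n k i j, 0 ≤ matConvPow a n k i j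
  | 0 => han
  | n + 1 => matConv_nonneg han (matConvPow_nonneg han n)

theorem hasSum_matConvPow (ha0 : a 0 = 0) (han : ∀ k i j, 0 ≤ a k i j) (ha : Summable a) :
    ∀ n, HasSum (matConvPow a n) ((∑' k, a k) ^ (n + 1))
  | 0 => by rw [zero_add, pow_one]; exact ha.hasSum
  | n + 1 => by
    have ih := hasSum_matConvPow ha0 han ha n
    rw [pow_succ', ← ih.tsum_eq]
    exact hasSum_matConv ha0 (matConvPow_apply_zero ha0 n) han (matConvPow_nonneg han n) ha
      ih.summable

end Convolution

/-- If the nonnegative matrices `(A_k)_{k≥1}` are summable with `S = Σ_k A_k` and `ρ(S) < 1`,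
then: (i) `Σ_k (A^{*n})_k = Sⁿ` for every `n ≥ 1` (here `matConvPow A n = A^{*(n+1)}`);
(ii) the double family `((A^{*n})_k)_{n,k}` is summable, so `B_k = Σ_{n≥1} (A^{*n})_k` is well
defined and `Σ_k B_k = (I − S)⁻¹ S`.
The family `(A_k)_{k≥1}` is encoded with `A 0 = 0`. -/
theorem stmt15 {d : ℕ} (A : ℕ → Matrix (Fin d) (Fin d) ℝ)
    (hA0 : A 0 = 0) (hAnn : ∀ k i j, 0 ≤ A k i j) (hAsum : Summable A)
    (S : Matrix (Fin d) (Fin d) ℝ) (hS : S = ∑' k, A k) (hρ : specRad S < 1) :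
    (∀ n : ℕ, ∑' k : ℕ, matConvPow A n k = S ^ (n + 1)) ∧
    Summable (fun q : ℕ × ℕ => matConvPow A q.1 q.2) ∧
    ∑' k : ℕ, (∑' n : ℕ, matConvPow A n k) = (1 - S)⁻¹ * S := by
  have hconv : ∀ n, HasSum (matConvPow A n) (S ^ (n + 1)) :=
    hS ▸ hasSum_matConvPow hA0 hAnn hAsum
  have hgeom : Summable (S ^ ·) := summable_pow_of_specRad_lt_one hρ
  have hdouble : Summable fun q : ℕ × ℕ => matConvPow A q.1 q.2 :=
    Matrix.summable_prod_of_nonneg_of_hasSum (fun q => matConvPow_nonneg hAnn q.1 q.2) hconv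
      ((summable_nat_add_iff 1).mpr hgeom)
  refine ⟨fun n => (hconv n).tsum_eq, hdouble, ?_⟩
  rw [hdouble.tsum_comm, ← Matrix.tsum_pow_succ_eq_inv_one_sub_mul hgeom]
  exact tsum_congr fun n => (hconv n).tsum_eq
end
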